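/- Semi-discrete energy conservation for the pairing-matrix (Petrov–Galerkin) scheme: let K₁ and \tilde K₁ be invertible, M_d and M_b symmetric positive definite, all time-independent, and suppose differentiable curves d, b, e, h satisfy d'(t) = \tilde D h(t), b'(t) = −D e(t), K₁ e(t) = M_d d(t), \tilde K₁ h(t) = M_b b(t), together with the algebraic identity eᵀ \tilde K₂ \tilde D h = hᵀ K₂ D e for all vectors (discrete integration by parts), where \tilde K₂ = K₁ᵀ and K₂ = \tilde K₁ᵀ. Then the energy ½(dᵀ M_d d + bᵀ M_b b) is constant in time. -/

import Mathlib

/-!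
For symmetric `M` the quadratic form `fᵀ M f` has derivative `2 f'ᵀ M f`, so the energy
changes at the rate `d'ᵀ M_d d + b'ᵀ M_b b`. Substituting the constitutive relations,
`d'ᵀ M_d d = (D̃ h)ᵀ K₁ e = eᵀ K̃₂ D̃ h` and `b'ᵀ M_b b = -(D e)ᵀ K̃₁ h = -hᵀ K₂ D e`, and these
cancel by the discrete integration by parts identity.
-/

open Matrix

section Calculus

variable {𝕜 : Type*} [NontriviallyNormedField 𝕜] {ι κ : Type*} [Fintype ι]
  {f g : 𝕜 → ι → 𝕜} {f' g' : ι → 𝕜} {t : 𝕜}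

theorem HasDerivAt.dotProduct (hf : HasDerivAt f f' t) (hg : HasDerivAt g g' t) :
    HasDerivAt (fun s => f s ⬝ᵥ g s) (f' ⬝ᵥ g t + f t ⬝ᵥ g') t := by
  have := HasDerivAt.fun_sum (u := Finset.univ) fun i _ =>
    (hasDerivAt_pi.1 hf i).mul (hasDerivAt_pi.1 hg i)
  unfold _root_.dotProduct
  rw [← Finset.sum_add_distrib]
  exact this

theorem HasDerivAt.mulVec (M : Matrix κ ι 𝕜) (hf : HasDerivAt f f' t) :
    HasDerivAt (fun s => M *ᵥ f s) (M *ᵥ f') t :=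
  hasDerivAt_pi.2 fun i => by
    unfold Matrix.mulVec _root_.dotProduct
    exact HasDerivAt.fun_sum (u := Finset.univ) fun j _ => (hasDerivAt_pi.1 hf j).const_mul (M i j)

theorem HasDerivAt.dotProduct_mulVec_self {M : Matrix ι ι 𝕜} (hM : M.IsSymm)
    (hf : HasDerivAt f f' t) :
    HasDerivAt (fun s => f s ⬝ᵥ (M *ᵥ f s)) (2 * (f' ⬝ᵥ (M *ᵥ f t))) t := by
  have hsymm : f t ⬝ᵥ (M *ᵥ f') = f' ⬝ᵥ (M *ᵥ f t) := by
    rw [dotProduct_mulVec, ← mulVec_transpose, hM.eq, dotProduct_comm]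
  simpa only [hsymm, two_mul] using hf.dotProduct (hf.mulVec M)

end Calculus

theorem pairing_power_balance {R ι κ : Type*} [CommSemiring R] [Fintype ι] [Fintype κ]
    {K₁ Md : Matrix ι ι R} {K₁t Mb : Matrix κ κ R} {Dt : Matrix ι κ R} {D : Matrix κ ι R}
    {x u : ι → R} {y v : κ → R}
    (hibp : u ⬝ᵥ (K₁ᵀ *ᵥ (Dt *ᵥ y)) = y ⬝ᵥ (K₁tᵀ *ᵥ (D *ᵥ u)))
    (hu : K₁ *ᵥ u = Md *ᵥ x) (hy : K₁t *ᵥ y = Mb *ᵥ v) :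
    (Dt *ᵥ y) ⬝ᵥ (Md *ᵥ x) = (D *ᵥ u) ⬝ᵥ (Mb *ᵥ v) := by
  calc (Dt *ᵥ y) ⬝ᵥ (Md *ᵥ x)
      = u ⬝ᵥ (K₁ᵀ *ᵥ (Dt *ᵥ y)) := by rw [← hu, dotProduct_transpose_mulVec]
    _ = y ⬝ᵥ (K₁tᵀ *ᵥ (D *ᵥ u)) := hibp
    _ = (D *ᵥ u) ⬝ᵥ (Mb *ᵥ v) := by rw [← hy, dotProduct_transpose_mulVec]

theorem energy_conservation_pairing_scheme_general {n m : ℕ}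
    (K₁ Md : Matrix (Fin n) (Fin n) ℝ) (K₁t Mb : Matrix (Fin m) (Fin m) ℝ)
    (Dt : Matrix (Fin n) (Fin m) ℝ) (D : Matrix (Fin m) (Fin n) ℝ)
    (hMd : Md.PosDef) (hMb : Mb.PosDef)
    (hibp : ∀ (x : Fin n → ℝ) (y : Fin m → ℝ),
      x ⬝ᵥ (K₁ᵀ *ᵥ (Dt *ᵥ y)) = y ⬝ᵥ (K₁tᵀ *ᵥ (D *ᵥ x)))
    (d e : ℝ → Fin n → ℝ) (b h : ℝ → Fin m → ℝ)
    (hd : Differentiable ℝ d) (hb : Differentiable ℝ b)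
    (h1 : ∀ t, deriv d t = Dt *ᵥ h t)
    (h2 : ∀ t, deriv b t = -(D *ᵥ e t))
    (h3 : ∀ t, K₁ *ᵥ e t = Md *ᵥ d t)
    (h4 : ∀ t, K₁t *ᵥ h t = Mb *ᵥ b t) :
    ∀ t s : ℝ,
      (1 / 2 : ℝ) * (d t ⬝ᵥ (Md *ᵥ d t) + b t ⬝ᵥ (Mb *ᵥ b t)) =
      (1 / 2 : ℝ) * (d s ⬝ᵥ (Md *ᵥ d s) + b s ⬝ᵥ (Mb *ᵥ b s)) := by
  have henergy_deriv : ∀ t, HasDerivAt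
      (fun s => (1 / 2 : ℝ) * (d s ⬝ᵥ (Md *ᵥ d s) + b s ⬝ᵥ (Mb *ᵥ b s))) 0 t := by
    intro t
    have hbalance := pairing_power_balance (hibp (e t) (h t)) (h3 t) (h4 t)
    have hquad :=
      ((hd t).hasDerivAt.dotProduct_mulVec_self (isHermitian_iff_isSymm.1 hMd.isHermitian)).add
        ((hb t).hasDerivAt.dotProduct_mulVec_self (isHermitian_iff_isSymm.1 hMb.isHermitian))
    refine (hquad.const_mul (1 / 2 : ℝ)).congr_deriv ?_
    rw [h1, h2, hbalance, neg_dotProduct]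
    ring
  exact is_const_of_deriv_eq_zero (fun t => (henergy_deriv t).differentiableAt)
    fun t => (henergy_deriv t).deriv

/-- Semi-discrete energy conservation for the pairing-matrix (Petrov–Galerkin)
scheme: if `K₁`, `K̃₁` are invertible, `M_d`, `M_b` symmetric positive definite,
the curves satisfy `d' = D̃ h`, `b' = −D e`, `K₁ e = M_d d`, `K̃₁ h = M_b b`, and
the discrete integration-by-parts identity `xᵀ K̃₂ D̃ y = yᵀ K₂ D x` holds for all
vectors, where `K̃₂ = K₁ᵀ` and `K₂ = K̃₁ᵀ`, then `½(dᵀ M_d d + bᵀ M_b b)` is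
constant in time. -/
theorem energy_conservation_pairing_scheme {n m : ℕ}
    (K₁ Md : Matrix (Fin n) (Fin n) ℝ) (K₁t Mb : Matrix (Fin m) (Fin m) ℝ)
    (Dt : Matrix (Fin n) (Fin m) ℝ) (D : Matrix (Fin m) (Fin n) ℝ)
    (hK₁ : IsUnit K₁.det) (hK₁t : IsUnit K₁t.det)
    (hMd : Md.PosDef) (hMb : Mb.PosDef)
    (hibp : ∀ (x : Fin n → ℝ) (y : Fin m → ℝ),
      x ⬝ᵥ (K₁ᵀ *ᵥ (Dt *ᵥ y)) = y ⬝ᵥ (K₁tᵀ *ᵥ (D *ᵥ x)))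
    (d e : ℝ → Fin n → ℝ) (b h : ℝ → Fin m → ℝ)
    (hd : Differentiable ℝ d) (hb : Differentiable ℝ b)
    (h1 : ∀ t, deriv d t = Dt *ᵥ h t)
    (h2 : ∀ t, deriv b t = -(D *ᵥ e t))
    (h3 : ∀ t, K₁ *ᵥ e t = Md *ᵥ d t)
    (h4 : ∀ t, K₁t *ᵥ h t = Mb *ᵥ b t) :
    ∀ t s : ℝ,
      (1 / 2 : ℝ) * (d t ⬝ᵥ (Md *ᵥ d t) + b t ⬝ᵥ (Mb *ᵥ b t)) =
      (1 / 2 : ℝ) * (d s ⬝ᵥ (Md *ᵥ d s) + b s ⬝ᵥ (Mb *ᵥ b s)) :=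
  energy_conservation_pairing_scheme_general K₁ Md K₁t Mb Dt D hMd hMb hibp d e b h hd hb h1 h2 h3
    h4
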